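/- Let F : ℝ^d → Y be a measurable classifier into a finite label set Y, and define the smoothed classifier G(x) = argmax over c of P[F(x+ε)=c] where ε ~ N(0, σ²I). Suppose for a point x there is a class c_A and bounds p_A, p_B ∈ [0,1] with P[F(x+ε)=c_A] ≥ p_A ≥ p_B ≥ max_{c≠c_A} P[F(x+ε)=c]. Then for every perturbation δ with ‖δ‖₂ < R := (σ/2)(Φ⁻¹(p_A) − Φ⁻¹(p_B)), we have G(x+δ) = c_A, where Φ⁻¹ is the inverse standard Gaussian CDF. -/

import Mathlib

/-!
Write the isotropic Gaussian as `σ • γ` with `γ` the standard Gaussian, so that moving the base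
point by `δ` translates `γ` by `v = σ⁻¹ • δ`. By the Cameron–Martin formula the translate has
density `exp (⟪v, z⟫ - ‖v‖² / 2)` with respect to `γ`, an increasing function of `⟪v, z⟫`.
By the Neyman–Pearson argument, among all sets of `γ`-measure `Φ a` the half-space
`{⟪v, z⟫ ≤ ‖v‖ a}` has the smallest translated measure, namely `Φ (a - ‖v‖)`; passing to
complements, a set of measure at most `Φ b` has translated measure at most `Φ (b + ‖v‖)`.
With `a = Φ⁻¹ pA` and `b = Φ⁻¹ pB` the radius condition says exactly `Φ (b + ‖v‖) < Φ (a - ‖v‖)`.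
-/

open MeasureTheory ProbabilityTheory

noncomputable def Phi (t : ℝ) : ℝ := ((gaussianReal 0 1) (Set.Iic t)).toReal

noncomputable def PhiInv (p : ℝ) : ℝ := Function.invFun Phi p

noncomputable def isoGaussian (d : ℕ) (σ : ℝ) : Measure (EuclideanSpace ℝ (Fin d)) :=
  (Measure.pi fun _ : Fin d => gaussianReal 0 ⟨σ ^ 2, sq_nonneg σ⟩).map
    (MeasurableEquiv.toLp 2 (Fin d → ℝ))

noncomputable def smoothProb {d : ℕ} {Y : Type*} (σ : ℝ)
    (F : EuclideanSpace ℝ (Fin d) → Y) (x : EuclideanSpace ℝ (Fin d)) (c : Y) : ℝ :=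
  (isoGaussian d σ {e | F (x + e) = c}).toReal

open Set Filter Topology ENNReal
open scoped NNReal RealInnerProductSpace

lemma Phi_eq_cdf : Phi = cdf (gaussianReal 0 1) := by
  ext t
  rw [Phi, cdf_eq_real, measureReal_def]

lemma gaussianReal_Ioc_eq_Phi_sub (a b : ℝ) :
    gaussianReal 0 1 (Ioc a b) = ENNReal.ofReal (Phi b - Phi a) := by
  rw [Phi_eq_cdf, ← StieltjesFunction.measure_Ioc, measure_cdf]

lemma Phi_strictMono : StrictMono Phi := by
  intro a b hab
  have hpos : gaussianReal 0 1 (Ioc a b) ≠ 0 := fun h0 =>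
    (not_le.2 hab) (by simpa using gaussianReal_absolutelyContinuous' 0 one_ne_zero h0)
  rw [gaussianReal_Ioc_eq_Phi_sub, Ne, ENNReal.ofReal_eq_zero, not_le] at hpos
  linarith

lemma Phi_continuous : Continuous Phi := by
  have := nullSingletonClass_gaussianReal (μ := 0) one_ne_zero
  rw [Phi_eq_cdf]
  refine continuous_iff_continuousAt.2 fun t => continuousAt_iff_continuous_left'_right'.2
    ⟨(monotone_cdf _).continuousWithinAt_Iio_iff_leftLim_eq.2 ?_,
      ((cdf (gaussianReal 0 1)).right_continuous t).mono Ioi_subset_Ici_self⟩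
  have h := (cdf (gaussianReal 0 1)).measure_singleton t
  rw [measure_cdf, measure_singleton, eq_comm, ENNReal.ofReal_eq_zero, sub_nonpos] at h
  exact le_antisymm ((monotone_cdf _).leftLim_le le_rfl) h

lemma Phi_neg (t : ℝ) : Phi (-t) = 1 - Phi t := by
  have := nullSingletonClass_gaussianReal (μ := 0) one_ne_zero
  have hsymm : gaussianReal 0 1 (Iic (-t)) = 1 - gaussianReal 0 1 (Iic t) := by
    conv_lhs => rw [← neg_zero, ← gaussianReal_map_neg]
    rw [Measure.map_apply measurable_neg measurableSet_Iic,
      measure_congr Iio_ae_eq_Iic.symm, ← prob_compl_eq_one_sub measurableSet_Iio]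
    congr 1
    ext x
    simp
  rw [Phi, Phi, hsymm, ENNReal.toReal_sub_of_le prob_le_one one_ne_top, toReal_one]

lemma Phi_PhiInv {p : ℝ} (hp : p ∈ Ioo 0 1) : Phi (PhiInv p) = p := by
  obtain ⟨a, ha⟩ := ((Phi_eq_cdf ▸ tendsto_cdf_atBot _).eventually_lt_const hp.1).exists
  obtain ⟨b, hb⟩ := ((Phi_eq_cdf ▸ tendsto_cdf_atTop _).eventually_const_lt hp.2).exists
  exact Function.invFun_eq (intermediate_value_univ a b Phi_continuous ⟨ha.le, hb.le⟩)

namespace MeasureTheory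

theorem lintegral_fin_nat_prod_eq_prod {n : ℕ} {X : Type*} [MeasurableSpace X]
    {μ : Fin n → Measure X} [∀ i, SigmaFinite (μ i)] {f : Fin n → X → ℝ≥0∞}
    (hf : ∀ i, Measurable (f i)) :
    ∫⁻ x, ∏ i, f i (x i) ∂(Measure.pi μ) = ∏ i, ∫⁻ x, f i x ∂(μ i) := by
  induction n with
  | zero => simp
  | succ n ih =>
    rw [← ((measurePreserving_piFinSuccAbove μ 0).symm).lintegral_comp_emb
      (MeasurableEquiv.measurableEmbedding _)]
    simp_rw [MeasurableEquiv.piFinSuccAbove_symm_apply, Fin.insertNthEquiv,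
      Fin.prod_univ_succ, Fin.insertNth_zero, Equiv.coe_fn_mk, Fin.cons_succ,
      Fin.zero_succAbove, cast_eq, Fin.cons_zero]
    rw [lintegral_prod_mul (g := fun x : Fin n → X => ∏ i, f i.succ (x i)) (hf 0).aemeasurable
      (Finset.measurable_prod _ fun i _ => (hf i.succ).comp (measurable_pi_apply i)).aemeasurable,
      ih fun i => hf i.succ]

theorem lintegral_fintype_prod_eq_prod {ι : Type*} [Fintype ι] {X : Type*} [MeasurableSpace X]
    {μ : ι → Measure X} [∀ i, SigmaFinite (μ i)] {f : ι → X → ℝ≥0∞}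
    (hf : ∀ i, Measurable (f i)) :
    ∫⁻ x, ∏ i, f i (x i) ∂(Measure.pi μ) = ∏ i, ∫⁻ x, f i x ∂(μ i) := by
  let e := (Fintype.equivFin ι).symm
  rw [← (measurePreserving_piCongrLeft _ e).lintegral_comp_emb
    (MeasurableEquiv.measurableEmbedding _)]
  simp_rw [← e.prod_comp, MeasurableEquiv.coe_piCongrLeft, Equiv.piCongrLeft_apply_apply]
  exact lintegral_fin_nat_prod_eq_prod fun i => hf (e i)

theorem Measure.pi_withDensity {ι : Type*} [Fintype ι] {X : Type*} [MeasurableSpace X]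
    {μ : ι → Measure X} [∀ i, SigmaFinite (μ i)] {f : ι → X → ℝ≥0∞} (hf : ∀ i, Measurable (f i))
    [∀ i, SigmaFinite ((μ i).withDensity (f i))] :
    Measure.pi (fun i => (μ i).withDensity (f i)) =
      (Measure.pi μ).withDensity (fun x => ∏ i, f i (x i)) := by
  refine Measure.pi_eq fun s hs => ?_
  have hind : ∀ x : ι → X, (univ.pi s).indicator (fun x => ∏ i, f i (x i)) x =
      ∏ i, (s i).indicator (f i) (x i) := by
    classical
    intro x
    simp [indicator_apply, Finset.prod_ite_zero]
  simp_rw [withDensity_apply _ (MeasurableSet.univ_pi hs), withDensity_apply _ (hs _),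
    ← lintegral_indicator (MeasurableSet.univ_pi hs), ← lintegral_indicator (hs _), hind]
  exact lintegral_fintype_prod_eq_prod fun i => (hf i).indicator (hs i)

lemma _root_.MeasurableEquiv.map_withDensity_comp {α β : Type*} [MeasurableSpace α]
    [MeasurableSpace β] (e : α ≃ᵐ β) (μ : Measure α) (g : β → ℝ≥0∞) :
    (μ.withDensity (g ∘ e)).map e = (μ.map e).withDensity g := by
  ext s hs
  rw [Measure.map_apply e.measurable hs, withDensity_apply _ (e.measurable hs),
    withDensity_apply _ hs, e.restrict_map, lintegral_map_equiv]
  rfl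

variable {α : Type*} [MeasurableSpace α] {μ : Measure α}

lemma measure_sdiff_le_measure_sdiff [IsFiniteMeasure μ] {A H : Set α} (hA : MeasurableSet A)
    (hH : MeasurableSet H) (hle : μ H ≤ μ A) : μ (H \ A) ≤ μ (A \ H) := by
  rw [← measure_inter_add_sdiff H hA, ← measure_inter_add_sdiff A hH, inter_comm] at hle
  exact (ENNReal.add_le_add_iff_left (measure_ne_top μ _)).1 hle

/-- The Neyman–Pearson lemma: a sublevel set of `f` minimises `∫⁻ x in A, f x ∂μ` among the sets
`A` of at least its measure. -/
theorem setLIntegral_le_setLIntegral_of_sublevel [IsFiniteMeasure μ] {f : α → ℝ≥0∞}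
    {A H : Set α} (hA : MeasurableSet A) (hH : MeasurableSet H) (hle : μ H ≤ μ A) {r : ℝ≥0∞}
    (hfH : ∀ x ∈ H, f x ≤ r) (hfHc : ∀ x ∉ H, r ≤ f x) :
    ∫⁻ x in H, f x ∂μ ≤ ∫⁻ x in A, f x ∂μ := by
  have hsdiff : ∫⁻ x in H \ A, f x ∂μ ≤ ∫⁻ x in A \ H, f x ∂μ := calc
    ∫⁻ x in H \ A, f x ∂μ ≤ ∫⁻ _ in H \ A, r ∂μ :=
      setLIntegral_mono' (hH.diff hA) fun x hx => hfH x hx.1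
    _ = r * μ (H \ A) := setLIntegral_const _ r
    _ ≤ r * μ (A \ H) := mul_le_mul_right (measure_sdiff_le_measure_sdiff hA hH hle) r
    _ = ∫⁻ _ in A \ H, r ∂μ := (setLIntegral_const _ r).symm
    _ ≤ ∫⁻ x in A \ H, f x ∂μ := setLIntegral_mono' (hA.diff hH) fun x hx => hfHc x hx.2
  rw [← lintegral_inter_add_sdiff f H hA, ← lintegral_inter_add_sdiff f A hH, inter_comm]
  gcongr

end MeasureTheory

namespace ProbabilityTheory

lemma gaussianReal_eq_withDensity_gaussianReal_zero (c : ℝ) {v : ℝ≥0} (hv : v ≠ 0) :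
    gaussianReal c v = (gaussianReal 0 v).withDensity
      (fun t => ENNReal.ofReal (Real.exp ((c * t - c ^ 2 / 2) / v))) := by
  rw [gaussianReal_of_var_ne_zero c hv, gaussianReal_of_var_ne_zero 0 hv,
    ← withDensity_mul _ (measurable_gaussianPDF 0 v) (by fun_prop)]
  congr 1
  ext t
  rw [Pi.mul_apply, gaussianPDF_def, gaussianPDF_def,
    ← ENNReal.ofReal_mul (gaussianPDFReal_nonneg 0 v t), gaussianPDFReal_def, gaussianPDFReal_def]
  simp only [mul_assoc, ← Real.exp_add]
  congr 3
  have : (v : ℝ) ≠ 0 := by exact_mod_cast hv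
  field_simp
  ring

lemma pi_gaussianReal_map_add {ι : Type*} [Fintype ι] (y : ι → ℝ) :
    (Measure.pi fun _ : ι => gaussianReal 0 1).map (· + y) =
      (Measure.pi fun _ : ι => gaussianReal 0 1).withDensity
        (fun x => ENNReal.ofReal (Real.exp (∑ i, y i * x i - (∑ i, y i ^ 2) / 2))) := by
  have hshift : ∀ i, (gaussianReal 0 1).map (· + y i) = (gaussianReal 0 1).withDensity
      (fun t => ENNReal.ofReal (Real.exp (y i * t - y i ^ 2 / 2))) := fun i => by
    rw [gaussianReal_map_add_const, zero_add]
    simpa using gaussianReal_eq_withDensity_gaussianReal_zero (y i) one_ne_zero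
  have : ∀ i, SigmaFinite ((gaussianReal 0 1).withDensity
      (fun t => ENNReal.ofReal (Real.exp (y i * t - y i ^ 2 / 2)))) := fun i => by
    rw [← hshift]
    infer_instance
  rw [show (· + y) = fun x i => x i + y i from rfl,
    Measure.pi_map_pi (f := fun i t => t + y i) (fun i => by fun_prop)]
  simp_rw [hshift]
  rw [Measure.pi_withDensity (fun i => by fun_prop)]
  congr 1
  ext x
  rw [← ENNReal.ofReal_prod_of_nonneg (fun i _ => (Real.exp_nonneg _)), ← Real.exp_sum,
    Finset.sum_sub_distrib, Finset.sum_div]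

lemma stdGaussian_map_inner {E : Type*} [NormedAddCommGroup E] [InnerProductSpace ℝ E]
    [FiniteDimensional ℝ E] [MeasurableSpace E] [BorelSpace E] {u : E} (hu : ‖u‖ = 1) :
    (stdGaussian E).map (fun e => ⟪u, e⟫) = gaussianReal 0 1 := by
  rw [show (fun e => ⟪u, e⟫) = innerSL ℝ u from rfl, IsGaussian.map_eq_gaussianReal,
    integral_strongDual_stdGaussian, variance_dual_stdGaussian]
  simp [hu]

lemma stdGaussian_real_setOf_inner_le {E : Type*} [NormedAddCommGroup E] [InnerProductSpace ℝ E]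
    [FiniteDimensional ℝ E] [MeasurableSpace E] [BorelSpace E] {u : E} (hu : ‖u‖ = 1) (τ : ℝ) :
    (stdGaussian E).real {e | ⟪u, e⟫ ≤ τ} = Phi τ := by
  rw [Phi, ← stdGaussian_map_inner hu, Measure.map_apply (by fun_prop) measurableSet_Iic,
    measureReal_def]
  rfl

variable {ι : Type*} [Fintype ι]

/-- The Cameron–Martin formula. -/
theorem stdGaussian_map_add (v : EuclideanSpace ℝ ι) :
    (stdGaussian (EuclideanSpace ℝ ι)).map (· + v) =
      (stdGaussian (EuclideanSpace ℝ ι)).withDensity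
        (fun e => ENNReal.ofReal (Real.exp (⟪v, e⟫ - ‖v‖ ^ 2 / 2))) := by
  have hcomm : (· + v) ∘ MeasurableEquiv.toLp 2 (ι → ℝ) =
      MeasurableEquiv.toLp 2 (ι → ℝ) ∘ (· + WithLp.ofLp v) := rfl
  rw [← map_pi_eq_stdGaussian, ← MeasurableEquiv.coe_toLp,
    Measure.map_map (by fun_prop) (by fun_prop), hcomm,
    ← Measure.map_map (by fun_prop) (by fun_prop), pi_gaussianReal_map_add,
    ← MeasurableEquiv.map_withDensity_comp]
  congr 2
  ext x
  simp [EuclideanSpace.real_norm_sq_eq, PiLp.inner_apply, mul_comm]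

lemma stdGaussian_map_add_apply_eq_zero_iff (v : EuclideanSpace ℝ ι)
    {A : Set (EuclideanSpace ℝ ι)} :
    (stdGaussian (EuclideanSpace ℝ ι)).map (· + v) A = 0 ↔
      stdGaussian (EuclideanSpace ℝ ι) A = 0 := by
  rw [stdGaussian_map_add, withDensity_apply_eq_zero' (by fun_prop)]
  simp [Real.exp_pos]

theorem Phi_sub_norm_le_stdGaussian_map_add_real {A : Set (EuclideanSpace ℝ ι)}
    (hA : MeasurableSet A) {a : ℝ} (ha : Phi a ≤ (stdGaussian (EuclideanSpace ℝ ι)).real A)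
    (v : EuclideanSpace ℝ ι) :
    Phi (a - ‖v‖) ≤ ((stdGaussian (EuclideanSpace ℝ ι)).map (· + v)).real A := by
  rcases eq_or_ne v 0 with rfl | hv
  · simpa using ha
  set μ := stdGaussian (EuclideanSpace ℝ ι)
  set u := ‖v‖⁻¹ • v
  have hu : ‖u‖ = 1 := norm_smul_inv_norm hv
  have hvu : ∀ e, ⟪v, e⟫ = ‖v‖ * ⟪u, e⟫ := fun e => by
    rw [real_inner_smul_left, mul_inv_cancel_left₀ (norm_ne_zero_iff.2 hv)]
  set H := {e : EuclideanSpace ℝ ι | ⟪u, e⟫ ≤ a}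
  have hH : MeasurableSet H := measurableSet_le (by fun_prop) measurable_const
  have hshiftH : (μ.map (· + v)).real H = Phi (a - ‖v‖) := by
    rw [map_measureReal_apply (by fun_prop) hH, ← stdGaussian_real_setOf_inner_le hu]
    have huv : ⟪u, v⟫ = ‖v‖ := by
      rw [real_inner_comm, hvu, real_inner_self_eq_norm_sq, hu, one_pow, mul_one]
    congr 1
    ext e
    simp [H, inner_add_right, huv, le_sub_iff_add_le]
  have hle : μ H ≤ μ A := by
    rw [← ofReal_measureReal, ← ofReal_measureReal, stdGaussian_real_setOf_inner_le hu]
    exact ENNReal.ofReal_le_ofReal ha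
  rw [← hshiftH]
  refine ENNReal.toReal_mono (measure_ne_top _ _) ?_
  rw [stdGaussian_map_add, withDensity_apply _ hH, withDensity_apply _ hA]
  refine setLIntegral_le_setLIntegral_of_sublevel hA hH hle
    (r := ENNReal.ofReal (Real.exp (‖v‖ * a - ‖v‖ ^ 2 / 2))) (fun e he => ?_) (fun e he => ?_)
  · gcongr
    rw [hvu]
    exact mul_le_mul_of_nonneg_left he (norm_nonneg v)
  · gcongr
    rw [hvu]
    exact mul_le_mul_of_nonneg_left (le_of_not_ge he) (norm_nonneg v)

theorem stdGaussian_map_add_real_le_Phi_add {B : Set (EuclideanSpace ℝ ι)}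
    (hB : MeasurableSet B) {b : ℝ} (hb : (stdGaussian (EuclideanSpace ℝ ι)).real B ≤ Phi b)
    (v : EuclideanSpace ℝ ι) :
    ((stdGaussian (EuclideanSpace ℝ ι)).map (· + v)).real B ≤ Phi (b + ‖v‖) := by
  have hBc : Phi (-b) ≤ (stdGaussian (EuclideanSpace ℝ ι)).real Bᶜ := by
    rw [probReal_compl_eq_one_sub hB, Phi_neg]
    linarith
  have hshift := Phi_sub_norm_le_stdGaussian_map_add_real hB.compl hBc v
  have : IsProbabilityMeasure ((stdGaussian (EuclideanSpace ℝ ι)).map (· + v)) :=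
    Measure.isProbabilityMeasure_map (by fun_prop)
  rw [probReal_compl_eq_one_sub hB, show -b - ‖v‖ = -(b + ‖v‖) by ring, Phi_neg] at hshift
  linarith

end ProbabilityTheory

lemma isoGaussian_eq_map_stdGaussian (d : ℕ) (σ : ℝ) :
    isoGaussian d σ = (stdGaussian (EuclideanSpace ℝ (Fin d))).map (σ • ·) := by
  have hscale : gaussianReal 0 ⟨σ ^ 2, sq_nonneg σ⟩ = (gaussianReal 0 1).map (σ * ·) := by
    rw [gaussianReal_map_const_mul, mul_zero, mul_one]
    rfl
  have hcomm : (σ • ·) ∘ MeasurableEquiv.toLp 2 (Fin d → ℝ) =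
      MeasurableEquiv.toLp 2 (Fin d → ℝ) ∘ (fun x i => σ * x i) := rfl
  rw [isoGaussian, hscale, ← Measure.pi_map_pi (f := fun _ t => σ * t) (fun _ => by fun_prop),
    Measure.map_map (by fun_prop) (by fun_prop), ← hcomm,
    ← Measure.map_map (by fun_prop) (by fun_prop), MeasurableEquiv.coe_toLp, map_pi_eq_stdGaussian]

lemma smoothProb_nonneg {d : ℕ} {Y : Type*} (σ : ℝ) (F : EuclideanSpace ℝ (Fin d) → Y)
    (x : EuclideanSpace ℝ (Fin d)) (c : Y) : 0 ≤ smoothProb σ F x c :=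
  ENNReal.toReal_nonneg

section SmoothProb

variable {d : ℕ} {Y : Type*} [MeasurableSpace Y] [MeasurableSingletonClass Y] {σ : ℝ}
  {F : EuclideanSpace ℝ (Fin d) → Y}

lemma measurableSet_setOf_add_smul_eq (hF : Measurable F) (σ : ℝ)
    (x : EuclideanSpace ℝ (Fin d)) (c : Y) :
    MeasurableSet {z : EuclideanSpace ℝ (Fin d) | F (x + σ • z) = c} :=
  (hF.comp (by fun_prop)) (measurableSet_singleton c)

lemma smoothProb_eq_stdGaussian_real (hF : Measurable F) (x : EuclideanSpace ℝ (Fin d)) (c : Y) :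
    smoothProb σ F x c =
      (stdGaussian (EuclideanSpace ℝ (Fin d))).real {z | F (x + σ • z) = c} := by
  rw [smoothProb, isoGaussian_eq_map_stdGaussian, ← measureReal_def, map_measureReal_apply
    (by fun_prop) (s := {e | F (x + e) = c}) ((hF.comp (by fun_prop)) (measurableSet_singleton c))]
  rfl

lemma smoothProb_add (hσ : σ ≠ 0) (hF : Measurable F) (x δ : EuclideanSpace ℝ (Fin d)) (c : Y) :
    smoothProb σ F (x + δ) c =
      ((stdGaussian (EuclideanSpace ℝ (Fin d))).map (· + σ⁻¹ • δ)).real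
        {z | F (x + σ • z) = c} := by
  rw [smoothProb_eq_stdGaussian_real hF, map_measureReal_apply (by fun_prop)
    (measurableSet_setOf_add_smul_eq hF σ x c)]
  congr 1
  ext z
  simp only [mem_ofPred_eq, mem_preimage, smul_add, smul_inv_smul₀ hσ]
  rw [add_assoc, add_comm δ]

lemma smoothProb_add_smoothProb_le_one (hF : Measurable F) (x : EuclideanSpace ℝ (Fin d))
    {c c' : Y} (hc : c ≠ c') : smoothProb σ F x c + smoothProb σ F x c' ≤ 1 := by
  simp only [smoothProb_eq_stdGaussian_real hF]
  rw [← measureReal_union _ (measurableSet_setOf_add_smul_eq hF σ x c')]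
  · exact measureReal_le_one
  · exact disjoint_left.2 fun z hz hz' => hc (hz.symm.trans hz')

lemma smoothProb_add_eq_zero_iff (hσ : σ ≠ 0) (hF : Measurable F)
    (x δ : EuclideanSpace ℝ (Fin d)) (c : Y) :
    smoothProb σ F (x + δ) c = 0 ↔ smoothProb σ F x c = 0 := by
  rw [smoothProb_add hσ hF, smoothProb_eq_stdGaussian_real hF, measureReal_eq_zero_iff,
    measureReal_eq_zero_iff, stdGaussian_map_add_apply_eq_zero_iff]

lemma smoothProb_add_lt_of_eq_zero (hσ : σ ≠ 0) (hF : Measurable F)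
    {x : EuclideanSpace ℝ (Fin d)} {c c' : Y} (hc : smoothProb σ F x c = 0)
    (hc' : smoothProb σ F x c' ≠ 0) (δ : EuclideanSpace ℝ (Fin d)) :
    smoothProb σ F (x + δ) c < smoothProb σ F (x + δ) c' := by
  rw [(smoothProb_add_eq_zero_iff hσ hF x δ c).2 hc]
  exact (smoothProb_nonneg σ F _ c').lt_of_ne' (mt (smoothProb_add_eq_zero_iff hσ hF x δ c').1 hc')

lemma Phi_sub_le_smoothProb_add (hσ : 0 < σ) (hF : Measurable F) {x : EuclideanSpace ℝ (Fin d)}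
    {c : Y} {a : ℝ} (ha : Phi a ≤ smoothProb σ F x c) (δ : EuclideanSpace ℝ (Fin d)) :
    Phi (a - ‖δ‖ / σ) ≤ smoothProb σ F (x + δ) c := by
  rw [smoothProb_eq_stdGaussian_real hF] at ha
  rw [smoothProb_add hσ.ne' hF]
  convert Phi_sub_norm_le_stdGaussian_map_add_real
    (measurableSet_setOf_add_smul_eq hF σ x c) ha (σ⁻¹ • δ) using 3
  rw [norm_smul, norm_inv, Real.norm_of_nonneg hσ.le, inv_mul_eq_div]

lemma smoothProb_add_le_Phi_add (hσ : 0 < σ) (hF : Measurable F) {x : EuclideanSpace ℝ (Fin d)}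
    {c : Y} {b : ℝ} (hb : smoothProb σ F x c ≤ Phi b) (δ : EuclideanSpace ℝ (Fin d)) :
    smoothProb σ F (x + δ) c ≤ Phi (b + ‖δ‖ / σ) := by
  rw [smoothProb_eq_stdGaussian_real hF] at hb
  rw [smoothProb_add hσ.ne' hF]
  convert stdGaussian_map_add_real_le_Phi_add
    (measurableSet_setOf_add_smul_eq hF σ x c) hb (σ⁻¹ • δ) using 3
  rw [norm_smul, norm_inv, Real.norm_of_nonneg hσ.le, inv_mul_eq_div]

end SmoothProb

theorem randomized_smoothing_certification_general
    {d : ℕ} {Y : Type*} [MeasurableSpace Y] [MeasurableSingletonClass Y] (σ : ℝ) (hσ : 0 < σ)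
    (F : EuclideanSpace ℝ (Fin d) → Y) (hF : Measurable F)
    (G : EuclideanSpace ℝ (Fin d) → Y)
    (hG : ∀ y : EuclideanSpace ℝ (Fin d), ∀ c : Y, smoothProb σ F y c ≤ smoothProb σ F y (G y))
    (x : EuclideanSpace ℝ (Fin d)) (cA : Y) (pA pB : ℝ)
    (h1 : pA ≤ smoothProb σ F x cA) (hAB : pB ≤ pA)
    (h2 : ∀ c : Y, c ≠ cA → smoothProb σ F x c ≤ pB)
    (δ : EuclideanSpace ℝ (Fin d))
    (hδ : ‖δ‖ < σ / 2 * (PhiInv pA - PhiInv pB)) :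
    G (x + δ) = cA := by
  have hBA : pB < pA := hAB.lt_of_ne (by rintro rfl; simpa using (norm_nonneg δ).trans_lt hδ)
  by_contra hc
  refine (hG (x + δ) cA).not_gt ?_
  have hcB := h2 _ hc
  have hB0 : 0 ≤ pB := (smoothProb_nonneg σ F x _).trans hcB
  -- `PhiInv 0` and `PhiInv 1` are junk values; in these cases translation preserving null sets
  -- is all that is needed.
  by_cases hdeg : pB = 0 ∨ 1 ≤ pA
  · refine smoothProb_add_lt_of_eq_zero hσ.ne' hF (le_antisymm ?_ (smoothProb_nonneg σ F x _))
      (by linarith) δ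
    rcases hdeg with h | h
    · exact h ▸ hcB
    · linarith [smoothProb_add_smoothProb_le_one (σ := σ) hF x hc]
  · obtain ⟨hB0', hA1⟩ := not_or.1 hdeg
    have hpA : pA ∈ Ioo 0 1 := ⟨hB0.trans_lt hBA, not_le.1 hA1⟩
    have hpB : pB ∈ Ioo 0 1 := ⟨hB0.lt_of_ne' hB0', hBA.trans hpA.2⟩
    have hgap : ‖δ‖ / σ < (PhiInv pA - PhiInv pB) / 2 := by
      rw [div_lt_iff₀ hσ]
      linarith
    calc smoothProb σ F (x + δ) (G (x + δ)) ≤ Phi (PhiInv pB + ‖δ‖ / σ) :=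
          smoothProb_add_le_Phi_add hσ hF ((Phi_PhiInv hpB).symm ▸ hcB) δ
      _ < Phi (PhiInv pA - ‖δ‖ / σ) := Phi_strictMono (by linarith)
      _ ≤ smoothProb σ F (x + δ) cA :=
          Phi_sub_le_smoothProb_add hσ hF ((Phi_PhiInv hpA).symm ▸ h1) δ

/-- Randomized smoothing certification (Cohen et al.): if the top class probability is
bounded below by pA and all other class probabilities above by pB, the smoothed
(argmax) classifier G is constant equal to cA within ℓ₂ radius (σ/2)(Φ⁻¹(pA) − Φ⁻¹(pB)). -/
theorem randomized_smoothing_certification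
    {d : ℕ} {Y : Type*} [Fintype Y] [MeasurableSpace Y] [MeasurableSingletonClass Y] (σ : ℝ) (hσ : 0 < σ)
    (F : EuclideanSpace ℝ (Fin d) → Y) (hF : Measurable F)
    (G : EuclideanSpace ℝ (Fin d) → Y)
    (hG : ∀ y : EuclideanSpace ℝ (Fin d), ∀ c : Y, smoothProb σ F y c ≤ smoothProb σ F y (G y))
    (x : EuclideanSpace ℝ (Fin d)) (cA : Y) (pA pB : ℝ)
    (hpA : pA ∈ Set.Icc (0 : ℝ) 1) (hpB : pB ∈ Set.Icc (0 : ℝ) 1)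
    (h1 : pA ≤ smoothProb σ F x cA) (hAB : pB ≤ pA)
    (h2 : ∀ c : Y, c ≠ cA → smoothProb σ F x c ≤ pB)
    (δ : EuclideanSpace ℝ (Fin d))
    (hδ : ‖δ‖ < σ / 2 * (PhiInv pA - PhiInv pB)) :
    G (x + δ) = cA :=
  randomized_smoothing_certification_general σ hσ F hF G hG x cA pA pB h1 hAB h2 δ hδ
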